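/- arXiv:2204.01014 — 5 statements merged into one kernel-verified Lean document; each statement's English description precedes it below -/
import Mathlib

section
/- If S and T are l-symbols of charge s with associated reading sequences z(S) and z(T), and S ⊴ T in the dominance order (i.e., for all j, Σ_{i=1}^j z(S)_i ≤ Σ_{i=1}^j z(T)_i) where S and T have the same underlying multiset of entries, then b'(S) ≤ b'(T); moreover, if in addition b'(S) = b'(T), then S = T. -/
open scoped BigOperators

/-- A finite `l`-symbol of charge `s`: an `l`-tuple of strictly increasing
integer sequences, the `i`-th of length `s i`. -/
structure FinSymbol (l : ℕ) (s : Fin l → ℕ) where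
  β : (i : Fin l) → Fin (s i) → ℤ
  strict : ∀ i : Fin l, StrictMono (β i)

/-- The weight `l(s_i - j) + i - 1` attached to the `j`-th position of the `i`-th row
(here `p.1`, `p.2` are the 0-based versions of `i - 1`, `j - 1`). -/
def wt {l : ℕ} {s : Fin l → ℕ} (p : (i : Fin l) × Fin (s i)) : ℕ :=
  l * (s p.1 - 1 - p.2.val) + p.1.val

/-- `b'(S) = Σ_{i,j} (l(s_i - j) + i - 1) β^i_j`. -/
def bprime {l : ℕ} {s : Fin l → ℕ} (S : FinSymbol l s) : ℤ :=
  ∑ p : (i : Fin l) × Fin (s i), (wt p : ℤ) * S.β p.1 p.2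

/-- `b(S) = Σ_{i,j} (l(s_i - j) + i - 1) (β^i_j - j + 1)` (with `j` 1-based). -/
def bInv {l : ℕ} {s : Fin l → ℕ} (S : FinSymbol l s) : ℤ :=
  ∑ p : (i : Fin l) × Fin (s i), (wt p : ℤ) * (S.β p.1 p.2 - (p.2.val : ℤ))

/-- The underlying multiset of entries of a symbol. -/
def entries {l : ℕ} {s : Fin l → ℕ} (S : FinSymbol l s) : Multiset ℤ :=
  (Finset.univ : Finset ((i : Fin l) × Fin (s i))).val.map fun p => S.β p.1 p.2

/-- The reading sequence `z(S)` of a symbol, relative to an enumeration `e` of the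
positions along which the weights are strictly decreasing. -/
def zseq {l : ℕ} {s : Fin l → ℕ} {N : ℕ} (e : Fin N ≃ ((i : Fin l) × Fin (s i)))
    (S : FinSymbol l s) (k : Fin N) : ℤ :=
  S.β (e k).1 (e k).2

/-- Abel-summation key lemma over `ℤ`. -/
lemma abel_key (N : ℕ) (W d : ℕ → ℤ)
    (hW : ∀ i, i + 1 < N → W (i + 1) + 1 ≤ W i)
    (hH : ∀ i, i < N → 0 ≤ ∑ j ∈ Finset.range (i + 1), d j)
    (htot : ∑ j ∈ Finset.range N, d j = 0) :
    0 ≤ ∑ k ∈ Finset.range N, W k * d k ∧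
      (∑ k ∈ Finset.range N, W k * d k = 0 → ∀ k < N, d k = 0) := by
  have habel : ∑ k ∈ Finset.range N, W k * d k =
      W (N - 1) * (∑ j ∈ Finset.range N, d j)
        - ∑ i ∈ Finset.range (N - 1),
            (W (i + 1) - W i) * (∑ j ∈ Finset.range (i + 1), d j) := by
    simpa [smul_eq_mul] using Finset.sum_range_by_parts W d N
  have hterm : ∀ i ∈ Finset.range (N - 1),
      (W (i + 1) - W i) * (∑ j ∈ Finset.range (i + 1), d j) ≤ 0 := by
    intro i hi
    have hi' : i + 1 < N := by have := Finset.mem_range.mp hi; omega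
    have h1 : W (i + 1) - W i ≤ 0 := by have := hW i hi'; omega
    exact mul_nonpos_of_nonpos_of_nonneg h1 (hH i (by omega))
  have hsum_nonpos :
      ∑ i ∈ Finset.range (N - 1),
        (W (i + 1) - W i) * (∑ j ∈ Finset.range (i + 1), d j) ≤ 0 :=
    Finset.sum_nonpos hterm
  have hge : 0 ≤ ∑ k ∈ Finset.range N, W k * d k := by
    rw [habel, htot]; linarith
  refine ⟨hge, fun heq k hk => ?_⟩
  have hzero :
      ∑ i ∈ Finset.range (N - 1),
        (W (i + 1) - W i) * (∑ j ∈ Finset.range (i + 1), d j) = 0 := by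
    rw [habel, htot] at heq; linarith
  have hall := (Finset.sum_eq_zero_iff_of_nonpos hterm).mp hzero
  -- all partial sums vanish
  have hG : ∀ m, m ≤ N → ∑ j ∈ Finset.range m, d j = 0 := by
    intro m hm
    rcases Nat.eq_zero_or_pos m with h0 | h1
    · simp [h0]
    rcases eq_or_lt_of_le hm with hEq | hlt
    · rw [hEq]; exact htot
    · have hi : m - 1 ∈ Finset.range (N - 1) := Finset.mem_range.mpr (by omega)
      have := hall (m - 1) hi
      have hm1 : m - 1 + 1 = m := by omega
      rw [hm1] at this
      have hc : W m - W (m - 1) ≤ -1 := by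
        have := hW (m - 1) (by omega); rw [hm1] at this; omega
      rcases mul_eq_zero.mp this with h | h
      · omega
      · exact h
  have h1 := hG (k + 1) (by omega)
  have h2 := hG k (by omega)
  rw [Finset.sum_range_succ, h2] at h1
  simpa using h1

lemma sum_Iic_fin {N : ℕ} (f : Fin N → ℤ) (i : ℕ) (hi : i < N) :
    ∑ k ∈ Finset.Iic (⟨i, hi⟩ : Fin N), f k
      = ∑ j ∈ Finset.range (i + 1), (if h : j < N then f ⟨j, h⟩ else 0) := by
  have h1 : (Finset.Iic (⟨i, hi⟩ : Fin N))
      = Finset.univ.filter (fun k : Fin N => k.val ≤ i) := by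
    ext k; simp [Fin.le_def]
  have h2 : Finset.range (i + 1) = (Finset.range N).filter (fun j => j ≤ i) := by
    ext j; simp; omega
  rw [h1, h2, Finset.sum_filter, Finset.sum_filter,
    ← Fin.sum_univ_eq_sum_range
      (fun j => if j ≤ i then (if h : j < N then f ⟨j, h⟩ else 0) else 0) N]
  exact Finset.sum_congr rfl fun k _ => by simp [k.isLt]

/-- if `S ⊴ T` in dominance order (on reading sequences) and `S`, `T`
have the same underlying multiset of entries, then `b'(S) ≤ b'(T)`, with equality
only if `S = T`. -/
theorem stmt4 (l : ℕ) (s : Fin l → ℕ) (hs : ∀ i j : Fin l, i ≤ j → s j ≤ s i)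
    (N : ℕ) (hN : N = ∑ i, s i)
    (e : Fin N ≃ ((i : Fin l) × Fin (s i)))
    (he : StrictAnti fun k : Fin N => wt (e k))
    (S T : FinSymbol l s)
    (hmult : entries S = entries T)
    (hdom : ∀ j : Fin N, ∑ k ∈ Finset.Iic j, zseq e S k ≤ ∑ k ∈ Finset.Iic j, zseq e T k) :
    bprime S ≤ bprime T ∧ (bprime S = bprime T → S = T) := by
  classical
  -- b' as a sum over the reading sequence
  have key : ∀ U : FinSymbol l s,
      bprime U = ∑ k : Fin N, (wt (e k) : ℤ) * zseq e U k := by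
    intro U
    exact (Equiv.sum_comp e (fun p => (wt p : ℤ) * U.β p.1 p.2)).symm
  -- total sums agree
  have hsum : ∑ k : Fin N, zseq e S k = ∑ k : Fin N, zseq e T k := by
    have h1 : ∑ p : (i : Fin l) × Fin (s i), S.β p.1 p.2
        = ∑ p : (i : Fin l) × Fin (s i), T.β p.1 p.2 := by
      exact congrArg Multiset.sum hmult
    calc ∑ k : Fin N, zseq e S k
        = ∑ p : (i : Fin l) × Fin (s i), S.β p.1 p.2 :=
          Equiv.sum_comp e (fun p => S.β p.1 p.2)
      _ = ∑ p : (i : Fin l) × Fin (s i), T.β p.1 p.2 := h1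
      _ = ∑ k : Fin N, zseq e T k := (Equiv.sum_comp e (fun p => T.β p.1 p.2)).symm
  -- set up ℕ-indexed functions
  set W : ℕ → ℤ := fun i => if h : i < N then (wt (e ⟨i, h⟩) : ℤ) else 0 with hWdef
  set d : ℕ → ℤ := fun i => if h : i < N then zseq e T ⟨i, h⟩ - zseq e S ⟨i, h⟩ else 0
    with hddef
  have hW : ∀ i, i + 1 < N → W (i + 1) + 1 ≤ W i := by
    intro i hi
    have hlt : (⟨i, by omega⟩ : Fin N) < ⟨i + 1, hi⟩ := by
      simp [Fin.lt_def]
    have := he hlt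
    simp only [hWdef, dif_pos hi, dif_pos (show i < N by omega)]
    exact_mod_cast this
  have hIic : ∀ (U : FinSymbol l s) (i : ℕ) (hi : i < N),
      ∑ k ∈ Finset.Iic (⟨i, hi⟩ : Fin N), zseq e U k
        = ∑ j ∈ Finset.range (i + 1), (if h : j < N then zseq e U ⟨j, h⟩ else 0) :=
    fun U i hi => sum_Iic_fin (zseq e U) i hi
  have hH : ∀ i, i < N → 0 ≤ ∑ j ∈ Finset.range (i + 1), d j := by
    intro i hi
    have := hdom ⟨i, hi⟩
    rw [hIic S i hi, hIic T i hi] at this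
    have heq : ∑ j ∈ Finset.range (i + 1), d j
        = (∑ j ∈ Finset.range (i + 1), (if h : j < N then zseq e T ⟨j, h⟩ else 0))
          - ∑ j ∈ Finset.range (i + 1), (if h : j < N then zseq e S ⟨j, h⟩ else 0) := by
      rw [← Finset.sum_sub_distrib]
      refine Finset.sum_congr rfl fun j _ => ?_
      simp only [hddef]
      split <;> simp
    rw [heq]; linarith
  have hrange : ∀ (f : Fin N → ℤ),
      ∑ j ∈ Finset.range N, (if h : j < N then f ⟨j, h⟩ else 0) = ∑ k : Fin N, f k := by
    intro f
    rw [← Fin.sum_univ_eq_sum_range (fun j => if h : j < N then f ⟨j, h⟩ else 0) N]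
    exact Finset.sum_congr rfl fun k _ => by simp [k.isLt]
  have htot : ∑ j ∈ Finset.range N, d j = 0 := by
    have heq : ∑ j ∈ Finset.range N, d j
        = ∑ k : Fin N, (zseq e T k - zseq e S k) := by
      rw [← hrange (fun k => zseq e T k - zseq e S k)]
    rw [heq, Finset.sum_sub_distrib, hsum, sub_self]
  have hdiff : bprime T - bprime S = ∑ k ∈ Finset.range N, W k * d k := by
    have heq : ∑ k ∈ Finset.range N, W k * d k
        = ∑ k : Fin N, (wt (e k) : ℤ) * (zseq e T k - zseq e S k) := by
      rw [← hrange (fun k => (wt (e k) : ℤ) * (zseq e T k - zseq e S k))]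
      refine Finset.sum_congr rfl fun j hj => ?_
      have hj' : j < N := Finset.mem_range.mp hj
      simp [hWdef, hddef, dif_pos hj']
    rw [heq, key S, key T, ← Finset.sum_sub_distrib]
    refine Finset.sum_congr rfl fun k _ => by ring
  obtain ⟨hge, heqz⟩ := abel_key N W d hW hH htot
  constructor
  · linarith [hdiff ▸ hge]
  · intro hbeq
    have hz : ∑ k ∈ Finset.range N, W k * d k = 0 := by rw [← hdiff, hbeq, sub_self]
    have hd0 := heqz hz
    have hzeq : ∀ k : Fin N, zseq e S k = zseq e T k := by
      intro k
      have := hd0 k.val k.isLt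
      simp only [hddef, dif_pos k.isLt, Fin.eta] at this
      omega
    have hβ' : ∀ p : (i : Fin l) × Fin (s i), S.β p.1 p.2 = T.β p.1 p.2 := by
      intro p
      have h := hzeq (e.symm p)
      simp only [zseq] at h
      rw [e.apply_symm_apply] at h
      exact h
    have hβ : S.β = T.β := funext fun i => funext fun j => hβ' ⟨i, j⟩
    cases S; cases T
    simp only at hβ
    cases hβ
    rfl
end

section
/- Suppose S and T are l-symbols in the same family (same multiset of entries) with S ≠ T, and let j be minimal with z(S)_j ≠ z(T)_j where T = S_F is the greedy symbol. Then there exists a symbol T' in the family with T' ⊴ S in dominance order, z(T')_i = z(S_F)_i for 1 ≤ i ≤ j - 1, and z(T')_j = z(S_F)_j. -/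
/-! Let `v = z(T)_j < u = z(S)_j`. As `S` and `T` have the same entries and agree before `j`, the
value `v` occurs in `S` at a later position `k`, of smaller weight. Swap the segment of the row of
`e j` starting at `e j` with the equally long segment of the row of `e k` starting at `e k`, taking
the longest length along which the entries of the second segment are the smaller ones. The rows
stay increasing, the entries are only permuted, nothing read before `j` moves, and every entry
that grows takes its value from a position read earlier, so every prefix sum can only drop. -/

open scoped BigOperators

open Finset Function

theorem sum_comp_le_of_involutive {ι M : Type*} [AddCommMonoid M] [LinearOrder M]
    [IsOrderedAddMonoid M] {τ : ι → ι} (hτ : Involutive τ) {y : ι → M} {P : Finset ι}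
    (hP : ∀ k ∈ P, y k < y (τ k) → τ k ∈ P) :
    ∑ k ∈ P, y (τ k) ≤ ∑ k ∈ P, y k := by
  classical
  rw [← sum_filter_add_sum_filter_not P (fun k => τ k ∈ P),
    ← sum_filter_add_sum_filter_not P (fun k => τ k ∈ P) y]
  refine add_le_add (le_of_eq ?_) (sum_le_sum fun k hk => ?_)
  · refine sum_nbij' τ τ (fun k hk => ?_) (fun k hk => ?_) (fun k _ => hτ k) (fun k _ => hτ k)
      (fun _ _ => rfl) <;>
    · simp only [mem_filter] at hk ⊢
      exact ⟨hk.2, by rw [hτ]; exact hk.1⟩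
  · simp only [mem_filter] at hk
    exact not_lt.1 fun h => hk.2 (hP k hk.1 h)

theorem exists_longest_prefix (P : ℕ → Prop) (n : ℕ) :
    ∃ k ≤ n, (∀ c < k, P c) ∧ (k < n → ¬P k) := by
  induction n with
  | zero => exact ⟨0, le_rfl, fun c hc => absurd hc c.not_lt_zero, fun h => absurd h (lt_irrefl 0)⟩
  | succ n ih =>
    obtain ⟨k, hkn, hP, hmax⟩ := ih
    by_cases hk : k = n ∧ P n
    · obtain ⟨rfl, hPk⟩ := hk
      exact ⟨k + 1, le_rfl, fun c hc => (Nat.lt_succ_iff_lt_or_eq.1 hc).elim (hP c) (· ▸ hPk),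
        fun h => absurd h (lt_irrefl _)⟩
    · refine ⟨k, hkn.trans n.le_succ, hP, fun _ => ?_⟩
      rcases hkn.lt_or_eq with h | rfl
      · exact hmax h
      · exact fun h => hk ⟨rfl, h⟩

theorem exists_gt_eq_of_map_eq {α : Type*} {N : ℕ} {x y : Fin N → α}
    (hxy : univ.val.map x = univ.val.map y) {j : Fin N} (hj : x j ≠ y j)
    (hpre : ∀ k < j, x k = y k) : ∃ k, j < k ∧ x k = y j := by
  set F := (univ : Finset (Fin N)).val.filter (j ≤ ·)
  set G := (univ : Finset (Fin N)).val.filter (¬j ≤ ·)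
  have hsplit (z : Fin N → α) : univ.val.map z = G.map z + F.map z := by
    rw [← Multiset.map_add, add_comm, Multiset.filter_add_not]
  have hG : G.map x = G.map y :=
    Multiset.map_congr rfl fun k hk => hpre k (not_le.1 (Multiset.mem_filter.1 hk).2)
  have hF : F.map x = F.map y := by
    rw [hsplit, hsplit, hG] at hxy
    exact add_left_cancel hxy
  have hjF : j ∈ F := Multiset.mem_filter.2 ⟨mem_univ_val j, le_rfl⟩
  obtain ⟨k, hk, hxk⟩ := Multiset.mem_map.1 (hF ▸ Multiset.mem_map_of_mem y hjF)
  have hjk : j ≤ k := (Multiset.mem_filter.1 hk).2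
  exact ⟨k, hjk.lt_of_ne (by rintro rfl; exact hj hxk), hxk⟩

theorem strictMonoOn_splice {β : Type*} [Preorder β] {f g : ℕ → β} {L lo k : ℕ}
    (hf : StrictMonoOn f (Set.Iio L)) (hg : StrictMonoOn g (Set.Iio k))
    (hleft : ∀ t < lo, ∀ c < k, f t < g c) (hright : ∀ c < k, ∀ t < L, lo + k ≤ t → g c < f t) :
    StrictMonoOn (fun t => if lo ≤ t ∧ t < lo + k then g (t - lo) else f t) (Set.Iio L) := by
  intro t ht t' ht' htt'
  simp only [Set.mem_Iio] at ht ht'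
  dsimp only
  split_ifs with h h'
  · exact hg (Set.mem_Iio.2 (by omega)) (Set.mem_Iio.2 (by omega)) (by omega)
  · exact hright _ (by omega) _ ht' (by omega)
  · exact hleft _ (by omega) _ (by omega)
  · exact hf ht ht' htt'

section

variable {l : ℕ} {s : Fin l → ℕ}

def posPair (p : (i : Fin l) × Fin (s i)) : Fin l × ℕ := (p.1, p.2)

theorem posPair_snd_lt (p : (i : Fin l) × Fin (s i)) : (posPair p).2 < s (posPair p).1 :=
  p.2.isLt

namespace FinSymbol

/-- Junk value `0` when `s x.1 ≤ x.2`. -/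
def entry (S : FinSymbol l s) (x : Fin l × ℕ) : ℤ :=
  if h : x.2 < s x.1 then S.β x.1 ⟨x.2, h⟩ else 0

theorem entry_mk (S : FinSymbol l s) (i : Fin l) (t : Fin (s i)) : S.entry (i, t) = S.β i t :=
  dif_pos t.isLt

theorem strictMonoOn_entry (S : FinSymbol l s) (i : Fin l) :
    StrictMonoOn (fun t => S.entry (i, t)) (Set.Iio (s i)) := fun t ht t' ht' h => by
  simp only [entry, dif_pos (Set.mem_Iio.1 ht), dif_pos (Set.mem_Iio.1 ht')]
  exact S.strict i h

theorem entry_lt_entry (S : FinSymbol l s) {i : Fin l} {t t' : ℕ} (h : t < t')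
    (ht' : t' < s i) : S.entry (i, t) < S.entry (i, t') :=
  S.strictMonoOn_entry i (h.trans ht') ht' h

theorem entry_le_entry (S : FinSymbol l s) {i : Fin l} {t t' : ℕ} (h : t ≤ t')
    (ht' : t' < s i) : S.entry (i, t) ≤ S.entry (i, t') :=
  (S.strictMonoOn_entry i).monotoneOn (h.trans_lt ht') ht' h

def precomp (S : FinSymbol l s) (σ : Fin l × ℕ → Fin l × ℕ)
    (h : ∀ i, StrictMonoOn (fun t => S.entry (σ (i, t))) (Set.Iio (s i))) : FinSymbol l s where
  β i t := S.entry (σ (i, t))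
  strict i t t' htt' := h i t.isLt t'.isLt htt'

theorem entries_eq_of_bijective {S T : FinSymbol l s}
    {π : (i : Fin l) × Fin (s i) → (i : Fin l) × Fin (s i)} (hπ : Bijective π) (h : ∀ p, T.β p.1 p.2 = S.β (π p).1 (π p).2) :
    entries T = entries S := by
  have hmap : univ.val.map π = univ.val := (Multiset.bijective_iff_map_univ_eq_univ π).1 hπ
  rw [entries, entries, funext h]
  conv_rhs => rw [← hmap, Multiset.map_map]
  rfl

theorem entries_eq_map_zseq {N : ℕ} (e : Fin N ≃ ((i : Fin l) × Fin (s i))) (S : FinSymbol l s) :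
    entries S = univ.val.map (zseq e S) := by
  rw [entries, ← Multiset.map_univ_val_equiv e, Multiset.map_map]
  rfl

end FinSymbol

/-- `wt p = pairWt s (posPair p)` holds by definition. -/
def pairWt (s : Fin l → ℕ) (x : Fin l × ℕ) : ℕ :=
  l * (s x.1 - 1 - x.2) + x.1

theorem pairWt_add_mul (i : Fin l) {t c : ℕ} (h : t + c < s i) :
    pairWt s (i, t + c) + l * c = pairWt s (i, t) := by
  simp only [pairWt]
  rw [add_right_comm, ← mul_add]
  congr 2
  omega

theorem strictAntiOn_pairWt (i : Fin l) :
    StrictAntiOn (fun t => pairWt s (i, t)) (Set.Iio (s i)) := by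
  intro t _ t' ht' htt'
  obtain ⟨c, rfl⟩ := Nat.exists_eq_add_of_lt htt'
  have h := pairWt_add_mul (s := s) i (c := c + 1) (by rw [← add_assoc]; exact ht')
  have hl : l * (c + 1) ≠ 0 := mul_ne_zero (Fin.pos i).ne' c.succ_ne_zero
  simp only [← add_assoc] at h ⊢
  omega

theorem pairWt_lt_pairWt_iff {x y : Fin l × ℕ} (h : x.1 = y.1) (hx : x.2 < s x.1)
    (hy : y.2 < s y.1) : pairWt s x < pairWt s y ↔ y.2 < x.2 := by
  obtain ⟨i, t⟩ := x
  obtain ⟨i', t'⟩ := y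
  obtain rfl : i = i' := h
  exact (strictAntiOn_pairWt i).lt_iff_gt hx hy

theorem sub_le_sub_of_pairWt_lt {x y : Fin l × ℕ} (hy : y.2 < s y.1)
    (h : pairWt s x < pairWt s y) : s x.1 - x.2 ≤ s y.1 - y.2 := by
  have hmul : l * (s x.1 - 1 - x.2) < l * (s y.1 - 1 - y.2 + 1) := by
    simp only [pairWt] at h
    rw [mul_add_one]
    have := y.1.isLt
    omega
  have := Nat.lt_of_mul_lt_mul_left hmul
  omega

def segSwap (i₀ r : Fin l) (a₀ a k : ℕ) (x : Fin l × ℕ) : Fin l × ℕ :=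
  if x.1 = i₀ ∧ a₀ ≤ x.2 ∧ x.2 < a₀ + k then (r, x.2 - a₀ + a)
  else if x.1 = r ∧ a ≤ x.2 ∧ x.2 < a + k then (i₀, x.2 - a + a₀)
  else x

section SegSwap

variable {i₀ r : Fin l} {a₀ a k : ℕ}

theorem segSwap_involutive (hne : i₀ ≠ r) : Involutive (segSwap i₀ r a₀ a k) := by
  rintro ⟨i, t⟩
  unfold segSwap
  by_cases h₀ : i = i₀ ∧ a₀ ≤ t ∧ t < a₀ + k
  · obtain ⟨rfl, h₁, h₂⟩ := h₀
    simp [h₁, h₂, hne.symm]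
    omega
  by_cases h₁ : i = r ∧ a ≤ t ∧ t < a + k
  · obtain ⟨rfl, h₂, h₃⟩ := h₁
    simp [h₂, h₃, hne.symm]
    omega
  simp only [if_neg h₀, if_neg h₁]

theorem segSwap_fst_eq (hne : i₀ ≠ r) (t : ℕ) :
    segSwap i₀ r a₀ a k (i₀, t) = if a₀ ≤ t ∧ t < a₀ + k then (r, t - a₀ + a) else (i₀, t) := by
  simp [segSwap, hne]

theorem segSwap_snd_eq (hne : i₀ ≠ r) (t : ℕ) :
    segSwap i₀ r a₀ a k (r, t) = if a ≤ t ∧ t < a + k then (i₀, t - a + a₀) else (r, t) := by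
  simp [segSwap, hne.symm]

theorem segSwap_of_ne {i : Fin l} (h₀ : i ≠ i₀) (h : i ≠ r) (t : ℕ) :
    segSwap i₀ r a₀ a k (i, t) = (i, t) := by
  simp [segSwap, h₀, h]

theorem segSwap_lt (h₀ : a₀ + k ≤ s i₀) (h : a + k ≤ s r) {x : Fin l × ℕ} (hx : x.2 < s x.1) :
    (segSwap i₀ r a₀ a k x).2 < s (segSwap i₀ r a₀ a k x).1 := by
  unfold segSwap
  split_ifs <;> simp_all <;> omega

theorem strictMonoOn_entry_segSwap (S : FinSymbol l s) (hne : i₀ ≠ r) (hk₀ : a₀ + k ≤ s i₀)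
    (hk : a + k ≤ s r) (hlen : s r - a ≤ s i₀ - a₀)
    (hpre : ∀ t < a₀, S.entry (i₀, t) < S.entry (r, a))
    (hrun : ∀ c < k, S.entry (r, c + a) < S.entry (i₀, c + a₀))
    (hmax : a + k < s r → S.entry (i₀, k + a₀) ≤ S.entry (r, k + a)) (i : Fin l) :
    StrictMonoOn (fun t => S.entry (segSwap i₀ r a₀ a k (i, t))) (Set.Iio (s i)) := by
  have hrow (i' : Fin l) {d n : ℕ} (h : d + n ≤ s i') :
      StrictMonoOn (fun c => S.entry (i', c + d)) (Set.Iio n) := fun c hc c' hc' hcc' =>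
    S.entry_lt_entry (by omega) (by simp only [Set.mem_Iio] at hc'; omega)
  by_cases hi₀ : i = i₀
  · subst hi₀
    simp only [segSwap_fst_eq hne, apply_ite S.entry]
    refine strictMonoOn_splice (S.strictMonoOn_entry i) (hrow r hk) (fun t ht c hc => ?_)
      fun c hc t ht hkt => ?_
    · exact (hpre t ht).trans_le (S.entry_le_entry (by omega) (by omega))
    · exact (hrun c hc).trans (S.entry_lt_entry (by omega) ht)
  by_cases hr : i = r
  · subst hr
    simp only [segSwap_snd_eq hne, apply_ite S.entry]
    refine strictMonoOn_splice (S.strictMonoOn_entry i) (hrow i₀ hk₀) (fun t ht c hc => ?_)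
      fun c hc t ht hkt => ?_
    · calc S.entry (i, t) < S.entry (i, 0 + a) := S.entry_lt_entry (by omega) (by omega)
        _ < S.entry (i₀, 0 + a₀) := hrun 0 (by omega)
        _ ≤ S.entry (i₀, c + a₀) := S.entry_le_entry (by omega) (by omega)
    · calc S.entry (i₀, c + a₀) < S.entry (i₀, k + a₀) := S.entry_lt_entry (by omega) (by omega)
        _ ≤ S.entry (i, k + a) := hmax (by omega)
        _ ≤ S.entry (i, t) := S.entry_le_entry (by omega) ht
  simp only [segSwap_of_ne hi₀ hr]
  exact S.strictMonoOn_entry i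

theorem segSwap_apply_start (hk : 0 < k) : segSwap i₀ r a₀ a k (i₀, a₀) = (r, a) := by
  simp [segSwap, hk]

theorem pairWt_le_of_segSwap_ne (hwt : pairWt s (r, a) < pairWt s (i₀, a₀))
    {x : Fin l × ℕ} (hx : x.2 < s x.1) (h : segSwap i₀ r a₀ a k x ≠ x) :
    pairWt s x ≤ pairWt s (i₀, a₀) := by
  obtain ⟨i, t⟩ := x
  unfold segSwap at h
  dsimp only at hx h ⊢
  split_ifs at h with h₀ h₁
  · obtain ⟨rfl, ht, -⟩ := h₀
    exact (strictAntiOn_pairWt i).antitoneOn (Set.mem_Iio.2 (by omega)) hx ht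
  · obtain ⟨rfl, ht, -⟩ := h₁
    exact ((strictAntiOn_pairWt i).antitoneOn (Set.mem_Iio.2 (by omega)) hx ht).trans hwt.le
  · exact absurd rfl h

theorem pairWt_lt_of_entry_lt_entry_segSwap (S : FinSymbol l s) (hk₀ : a₀ + k ≤ s i₀)
    (hwt : pairWt s (r, a) < pairWt s (i₀, a₀))
    (hrun : ∀ c < k, S.entry (r, c + a) < S.entry (i₀, c + a₀))
    {x : Fin l × ℕ} (hx : x.2 < s x.1) (h : S.entry x < S.entry (segSwap i₀ r a₀ a k x)) :
    pairWt s x < pairWt s (segSwap i₀ r a₀ a k x) := by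
  obtain ⟨i, t⟩ := x
  unfold segSwap at h ⊢
  dsimp only at hx h ⊢
  split_ifs at h ⊢ with h₀ h₁
  · obtain ⟨rfl, ht, htk⟩ := h₀
    have := hrun (t - a₀) (by omega)
    rw [Nat.sub_add_cancel ht] at this
    exact absurd h this.not_gt
  · obtain ⟨rfl, ht, htk⟩ := h₁
    have hr : pairWt s (i, t) + l * (t - a) = pairWt s (i, a) := by
      simpa only [Nat.add_sub_cancel' ht] using
        pairWt_add_mul (s := s) i (t := a) (c := t - a) (by omega)
    have hi₀ : pairWt s (i₀, t - a + a₀) + l * (t - a) = pairWt s (i₀, a₀) := by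
      rw [add_comm (t - a)]
      exact pairWt_add_mul i₀ (by omega)
    omega
  · exact absurd h (lt_irrefl _)

end SegSwap

def liftPos (σ : Fin l × ℕ → Fin l × ℕ) (hσ : ∀ x : Fin l × ℕ, x.2 < s x.1 → (σ x).2 < s (σ x).1)
    (p : (i : Fin l) × Fin (s i)) : (i : Fin l) × Fin (s i) :=
  ⟨(σ (posPair p)).1, (σ (posPair p)).2, hσ _ (posPair_snd_lt p)⟩

theorem liftPos_involutive {σ : Fin l × ℕ → Fin l × ℕ}
    (hσ : ∀ x : Fin l × ℕ, x.2 < s x.1 → (σ x).2 < s (σ x).1) (hinv : Involutive σ) :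
    Involutive (liftPos σ hσ) := fun p => by
  have h : σ (σ (posPair p)) = posPair p := hinv _
  exact Sigma.ext (congrArg Prod.fst h)
    ((Fin.heq_ext_iff (congrArg (s ∘ Prod.fst) h)).2 (congrArg Prod.snd h))

namespace FinSymbol

theorem zseq_eq_entry {N : ℕ} (e : Fin N ≃ ((i : Fin l) × Fin (s i))) (S : FinSymbol l s)
    (k : Fin N) : zseq e S k = S.entry (posPair (e k)) :=
  (entry_mk S _ _).symm

theorem zseq_precomp {N : ℕ} (e : Fin N ≃ ((i : Fin l) × Fin (s i))) (S : FinSymbol l s)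
    {σ : Fin l × ℕ → Fin l × ℕ}
    (hrow : ∀ i, StrictMonoOn (fun t => S.entry (σ (i, t))) (Set.Iio (s i))) (k : Fin N) :
    zseq e (S.precomp σ hrow) k = S.entry (σ (posPair (e k))) :=
  rfl

theorem entries_precomp (S : FinSymbol l s) {σ : Fin l × ℕ → Fin l × ℕ}
    (hσ : ∀ x : Fin l × ℕ, x.2 < s x.1 → (σ x).2 < s (σ x).1) (hinv : Involutive σ)
    (hrow : ∀ i, StrictMonoOn (fun t => S.entry (σ (i, t))) (Set.Iio (s i))) :
    entries (S.precomp σ hrow) = entries S :=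
  entries_eq_of_bijective (liftPos_involutive hσ hinv).bijective fun p =>
    entry_mk S (liftPos σ hσ p).1 (liftPos σ hσ p).2

/-- Heavier positions are read earlier, so every prefix of the reading order is closed under
the moves that increase an entry. -/
theorem sum_zseq_precomp_le {N : ℕ} (e : Fin N ≃ ((i : Fin l) × Fin (s i)))
    (he : StrictAnti fun k : Fin N => wt (e k)) (S : FinSymbol l s) {σ : Fin l × ℕ → Fin l × ℕ}
    (hσ : ∀ x : Fin l × ℕ, x.2 < s x.1 → (σ x).2 < s (σ x).1) (hinv : Involutive σ)
    (hrow : ∀ i, StrictMonoOn (fun t => S.entry (σ (i, t))) (Set.Iio (s i)))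
    (hwt : ∀ x : Fin l × ℕ, x.2 < s x.1 → S.entry x < S.entry (σ x) → pairWt s x < pairWt s (σ x))
    (m : Fin N) :
    ∑ k ∈ Iic m, zseq e (S.precomp σ hrow) k ≤ ∑ k ∈ Iic m, zseq e S k := by
  set τ : Fin N → Fin N := e.symm ∘ liftPos σ hσ ∘ e
  have hτe (k : Fin N) : e (τ k) = liftPos σ hσ (e k) := e.apply_symm_apply _
  have hτ : Involutive τ := fun k => by simp [τ, liftPos_involutive hσ hinv (e k)]
  have hzseq (k : Fin N) : zseq e (S.precomp σ hrow) k = zseq e S (τ k) := by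
    rw [zseq, zseq, hτe]
    exact entry_mk S (liftPos σ hσ (e k)).1 (liftPos σ hσ (e k)).2
  simp only [hzseq]
  refine sum_comp_le_of_involutive hτ fun k hk h => mem_Iic.2 ((lt_of_lt_of_le ?_ (mem_Iic.1 hk)).le)
  rw [← hzseq, zseq_eq_entry] at h
  refine he.lt_iff_gt.1 ?_
  rw [hτe]
  exact hwt _ (posPair_snd_lt (e k)) h

end FinSymbol

section Reading

variable {N : ℕ} {e : Fin N ≃ ((i : Fin l) × Fin (s i))}

theorem lt_iff_of_fst_eq (he : StrictAnti fun k : Fin N => wt (e k)) {i j : Fin N}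
    (h : (e i).1 = (e j).1) : i < j ↔ ((e i).2 : ℕ) < (e j).2 :=
  he.lt_iff_gt.symm.trans
    (pairWt_lt_pairWt_iff (x := posPair (e j)) (y := posPair (e i)) h.symm (posPair_snd_lt _)
      (posPair_snd_lt _))

theorem zseq_lt_zseq_of_fst_eq (he : StrictAnti fun k : Fin N => wt (e k)) (S : FinSymbol l s)
    {i j : Fin N} (hij : i < j) (h : (e i).1 = (e j).1) : zseq e S i < zseq e S j := by
  have hcol := (lt_iff_of_fst_eq he h).1 hij
  have hj := posPair_snd_lt (e j)
  rw [FinSymbol.zseq_eq_entry, FinSymbol.zseq_eq_entry]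
  change (posPair (e i)).1 = (posPair (e j)).1 at h
  change (posPair (e i)).2 < (posPair (e j)).2 at hcol
  generalize posPair (e i) = x at *
  generalize posPair (e j) = y at *
  obtain ⟨i, t⟩ := x
  obtain ⟨i', t'⟩ := y
  obtain rfl : i = i' := h
  exact S.entry_lt_entry hcol hj

theorem entry_lt_of_forall_zseq_lt (he : StrictAnti fun k : Fin N => wt (e k))
    {S : FinSymbol l s} {j : Fin N} {v : ℤ}
    (hrow : ∀ i < j, (e i).1 = (e j).1 → zseq e S i < v) :
    ∀ t < (posPair (e j)).2, S.entry ((posPair (e j)).1, t) < v := fun t ht => by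
  have hi := e.apply_symm_apply ⟨(e j).1, t, ht.trans (posPair_snd_lt _)⟩
  have hrow' := hrow (e.symm _) ((lt_iff_of_fst_eq he (by rw [hi])).2 (by rw [hi]; exact ht))
    (by rw [hi])
  rwa [FinSymbol.zseq_eq_entry, hi] at hrow'

theorem exists_exchange (he : StrictAnti fun k : Fin N => wt (e k)) (S : FinSymbol l s)
    {j k : Fin N} (hjk : j < k) (hlt : zseq e S k < zseq e S j)
    (hrow : ∀ i < j, (e i).1 = (e j).1 → zseq e S i < zseq e S k) :
    ∃ T' : FinSymbol l s, entries T' = entries S ∧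
      (∀ m, ∑ i ∈ Iic m, zseq e T' i ≤ ∑ i ∈ Iic m, zseq e S i) ∧
      (∀ i < j, zseq e T' i = zseq e S i) ∧ zseq e T' j = zseq e S k := by
  set x₀ := posPair (e j) with hx₀
  set y := posPair (e k) with hy
  have hx₀lt : x₀.2 < s x₀.1 := posPair_snd_lt _
  have hylt : y.2 < s y.1 := posPair_snd_lt _
  rw [FinSymbol.zseq_eq_entry e S k, ← hy] at hlt hrow
  rw [FinSymbol.zseq_eq_entry e S j, ← hx₀] at hlt
  have hwt : pairWt s y < pairWt s x₀ := he hjk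
  have hpre := entry_lt_of_forall_zseq_lt he hrow
  have hne : x₀.1 ≠ y.1 := fun h => by
    have hcol := (pairWt_lt_pairWt_iff h.symm hylt hx₀lt).1 hwt
    have hlt' := S.entry_lt_entry (i := x₀.1) hcol (h ▸ hylt)
    rw [show (x₀.1, y.2) = y from Prod.ext h rfl] at hlt'
    exact hlt'.not_gt hlt
  have hlen : s y.1 - y.2 ≤ s x₀.1 - x₀.2 := sub_le_sub_of_pairWt_lt hx₀lt hwt
  obtain ⟨n, hn, hrun, hmax⟩ :=
    exists_longest_prefix (fun c => S.entry (y.1, c + y.2) < S.entry (x₀.1, c + x₀.2))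
      (s y.1 - y.2)
  have hn0 : 0 < n := Nat.pos_of_ne_zero fun h0 =>
    hmax (by omega) (by simpa [h0] using hlt)
  have hk₀ : x₀.2 + n ≤ s x₀.1 := by omega
  have hk : y.2 + n ≤ s y.1 := by omega
  have hσ := segSwap_involutive (a₀ := x₀.2) (a := y.2) (k := n) hne
  have hvalid := fun x => segSwap_lt (i₀ := x₀.1) (r := y.1) (a₀ := x₀.2) (a := y.2) (k := n)
    hk₀ hk (x := x)
  have hstrict := strictMonoOn_entry_segSwap S hne hk₀ hk hlen hpre hrun
    fun h => not_lt.1 (hmax (by omega))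
  refine ⟨S.precomp _ hstrict, S.entries_precomp hvalid hσ hstrict,
    S.sum_zseq_precomp_le e he hvalid hσ hstrict
      fun x hx => pairWt_lt_of_entry_lt_entry_segSwap S hk₀ hwt hrun hx, fun i hi => ?_, ?_⟩
  · rw [FinSymbol.zseq_precomp, FinSymbol.zseq_eq_entry]
    refine congrArg S.entry (not_not.1 fun hmove => ?_)
    have hij : pairWt s x₀ < pairWt s (posPair (e i)) := he hi
    exact (pairWt_le_of_segSwap_ne hwt (posPair_snd_lt (e i)) hmove).not_gt hij
  · rw [FinSymbol.zseq_precomp, FinSymbol.zseq_eq_entry, ← hx₀, ← hy]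
    exact congrArg S.entry (segSwap_apply_start hn0)

end Reading

end

theorem stmt8_general (l : ℕ) (s : Fin l → ℕ)
    (N : ℕ)
    (e : Fin N ≃ ((i : Fin l) × Fin (s i)))
    (he : StrictAnti fun k : Fin N => wt (e k))
    (S T : FinSymbol l s) (hST : entries S = entries T)
    (hgreedy : ∀ S' : FinSymbol l s, entries S' = entries T →
      ∀ i : Fin N, (∀ k < i, zseq e S' k = zseq e T k) → zseq e T i ≤ zseq e S' i)
    (j : Fin N) (hj : zseq e S j ≠ zseq e T j)
    (hjmin : ∀ k < j, zseq e S k = zseq e T k) :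
    ∃ T' : FinSymbol l s, entries T' = entries T ∧
      (∀ m : Fin N, ∑ k ∈ Finset.Iic m, zseq e T' k ≤ ∑ k ∈ Finset.Iic m, zseq e S k) ∧
      (∀ i < j, zseq e T' i = zseq e T i) ∧ zseq e T' j = zseq e T j := by
  have hTS : zseq e T j < zseq e S j := (hgreedy S hST j hjmin).lt_of_ne' hj
  obtain ⟨k, hjk, hk⟩ := exists_gt_eq_of_map_eq (x := zseq e S) (y := zseq e T)
    (by rw [← FinSymbol.entries_eq_map_zseq, ← FinSymbol.entries_eq_map_zseq, hST]) hj hjmin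
  obtain ⟨T', hT', hdom, hpre, hT'j⟩ := exists_exchange he S hjk (hk ▸ hTS) fun i hi hrow => by
    rw [hjmin i hi, hk]
    exact zseq_lt_zseq_of_fst_eq he T hi hrow
  exact ⟨T', hT'.trans hST, hdom, fun i hi => (hpre i hi).trans (hjmin i hi), hT'j.trans hk⟩

/-- the exchange step. If `S ≠ T` are in the same family, `T` is the greedy
symbol, and `j` is minimal with `z(S)_j ≠ z(T)_j`, then there is a symbol `T'` in the
family with `T' ⊴ S` whose reading sequence agrees with that of `T` up to position `j`. -/
theorem stmt8 (l : ℕ) (s : Fin l → ℕ) (hs : ∀ i j : Fin l, i ≤ j → s j ≤ s i)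
    (N : ℕ) (hN : N = ∑ i, s i)
    (e : Fin N ≃ ((i : Fin l) × Fin (s i)))
    (he : StrictAnti fun k : Fin N => wt (e k))
    (S T : FinSymbol l s) (hST : entries S = entries T) (hne : S ≠ T)
    (hgreedy : ∀ S' : FinSymbol l s, entries S' = entries T →
      ∀ i : Fin N, (∀ k < i, zseq e S' k = zseq e T k) → zseq e T i ≤ zseq e S' i)
    (j : Fin N) (hj : zseq e S j ≠ zseq e T j)
    (hjmin : ∀ k < j, zseq e S k = zseq e T k) :
    ∃ T' : FinSymbol l s, entries T' = entries T ∧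
      (∀ m : Fin N, ∑ k ∈ Finset.Iic m, zseq e T' k ≤ ∑ k ∈ Finset.Iic m, zseq e S k) ∧
      (∀ i < j, zseq e T' i = zseq e T i) ∧ zseq e T' j = zseq e T j :=
  stmt8_general l s N e he S T hST hgreedy j hj hjmin
end

section
/- Let s = (s_1, s_2) ∈ Z^2 with s_1 > s_2, and let S^0 be the symbol corresponding to the empty bipartition. Then for any n ∈ N, any k ∈ N, any i_1,...,i_k ∈ Z, and any r_1,...,r_k ∈ {1,2} with Σ r_j = n, if the vector F_{i_k}^{(r_k)} ··· F_{i_1}^{(r_1)} · v_{S^0} in the Fock space F'_s = V(Λ_{s_1}) ⊗ V(Λ_{s_2}) is nonzero, then there exist j_1,...,j_n ∈ Z such that F_{i_k}^{(r_k)} ··· F_{i_1}^{(r_1)} · v_{S^0} = F_{j_n} ··· F_{j_1} · v_{S^0}. -/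
open Classical

/-- The diagonal coefficient of `K_i` on a basis vector `v_β` of `V(Λ_k)`:
`q` if `i ∈ β, i+1 ∉ β`, `q⁻¹` if `i ∉ β, i+1 ∈ β`, and `1` otherwise. -/
noncomputable def Kcoef (i : ℤ) (β : Set ℤ) : RatFunc ℚ :=
  if i ∈ β ∧ (i + 1) ∉ β then RatFunc.X
  else if i ∉ β ∧ (i + 1) ∈ β then RatFunc.X⁻¹
  else 1

/-- The operator `F_i` on the tensor product `V(Λ_{s_1}) ⊗ V(Λ_{s_2})` (with basis
indexed by pairs of subsets of `ℤ`), given by the coproduct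
`Δ(F_i) = F_i ⊗ K_i + 1 ⊗ F_i`. -/
noncomputable def F2 (i : ℤ) :
    ((Set ℤ × Set ℤ) →₀ RatFunc ℚ) →ₗ[RatFunc ℚ] ((Set ℤ × Set ℤ) →₀ RatFunc ℚ) :=
  Finsupp.lsum (RatFunc ℚ) fun p =>
    (if i ∈ p.1 ∧ (i + 1) ∉ p.1 then
        Kcoef i p.2 • Finsupp.lsingle ((p.1 \ {i}) ∪ {i + 1}, p.2) else 0)
      + (if i ∈ p.2 ∧ (i + 1) ∉ p.2 then
          Finsupp.lsingle (p.1, (p.2 \ {i}) ∪ {i + 1}) else 0)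

/-- The divided power `F_i^{(r)}` for `r = 1, 2`: `F_i^{(2)} = F_i²/[2]`, `[2] = q + q⁻¹`. -/
noncomputable def F2d (i : ℤ) (r : ℕ) :
    ((Set ℤ × Set ℤ) →₀ RatFunc ℚ) →ₗ[RatFunc ℚ] ((Set ℤ × Set ℤ) →₀ RatFunc ℚ) :=
  if r = 2 then (RatFunc.X + RatFunc.X⁻¹ : RatFunc ℚ)⁻¹ • (F2 i ∘ₗ F2 i) else F2 i

/-- The highest weight vector `v_{S⁰}` of `V(Λ_{s_1}) ⊗ V(Λ_{s_2})`. -/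
noncomputable def v0 (s1 s2 : ℤ) : (Set ℤ × Set ℤ) →₀ RatFunc ℚ :=
  Finsupp.single ({j | j ≤ s1}, {j | j ≤ s2}) 1

/-- Application of a word `F_{i_k}^{(r_k)} ⋯ F_{i_1}^{(r_1)}` (the list being
`[(i_1, r_1), …, (i_k, r_k)]`) to a vector. -/
noncomputable def applyW (L : List (ℤ × ℕ)) (v : (Set ℤ × Set ℤ) →₀ RatFunc ℚ) :
    (Set ℤ × Set ℤ) →₀ RatFunc ℚ :=
  L.foldl (fun w p => F2d p.1 p.2 w) v

/-!
By the coproduct, `F_i = Ftop i ∘ Kbot i + Fbot i`, where `Ftop i` and `Fbot i` move a bead from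
`i` to `i + 1` in the first, resp. second, β-set and `Kbot i` is `K_i` acting on the second one.
Their commutation relations give `F_i^{(2)} = q Ftop_i K_i Fbot_i`, `F_i^{(2)} F_i = 0` and the
quantum Serre relation `F_i^{(2)} F_j + F_j F_i^{(2)} = F_i F_j F_i` for `|i - j| = 1`.
Since `F_i^{(2)}` needs a bead movable at `i` in both rows, it kills every weight vector whose
`i`-th weight is not `2`, such as `v_{S⁰}` when `s₁ ≠ s₂`. Now push a divided power
`F_i^{(2)}` down a word `F_{j_k} ⋯ F_{j_1} v_{S⁰}`: it commutes with `F_j` for `|i - j| ≥ 2`, and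
for `|i - j| = 1` a nonzero result forces the vector `u` below `F_j` to have `i`-th weight `1`,
so `F_i^{(2)} u = 0` and the Serre relation turns `F_i^{(2)} F_j u` into `F_i F_j F_i u`.
-/

noncomputable section

namespace Finsupp

variable {α β γ R : Type*} [CommSemiring R]

def filterMapDomain (g : α → Option β) : (α →₀ R) →ₗ[R] β →₀ R :=
  lsum R fun a => (g a).elim 0 lsingle

theorem filterMapDomain_single (g : α → Option β) (a : α) (c : R) :
    filterMapDomain g (single a c) = (g a).elim 0 (single · c) := by
  cases h : g a <;> simp [filterMapDomain, h]

theorem filterMapDomain_filterMapDomain (g : β → Option γ) (h : α → Option β) (v : α →₀ R) :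
    filterMapDomain g (filterMapDomain h v) = filterMapDomain (fun a => (h a).bind g) v := by
  induction v using induction_linear with
  | zero => simp
  | add v w hv hw => simp only [map_add, hv, hw]
  | single a c => cases ha : h a <;> simp [filterMapDomain_single, ha]

theorem filterMapDomain_none (v : α →₀ R) :
    filterMapDomain (fun _ => (none : Option β)) v = 0 := by
  simp [filterMapDomain, Finsupp.sum]

theorem exists_of_mem_support_filterMapDomain {g : α → Option β} {v : α →₀ R} {b : β}
    (hb : b ∈ (filterMapDomain g v).support) : ∃ a ∈ v.support, g a = Option.some b := by
  rw [filterMapDomain, lsum_apply] at hb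
  obtain ⟨a, ha, hab⟩ := Finset.mem_biUnion.mp (support_sum hb)
  refine ⟨a, ha, ?_⟩
  cases h : g a <;> simp_all

theorem filterMapDomain_mem_supported {g : α → Option β} {s : Set α} {t : Set β} {v : α →₀ R}
    (hv : v ∈ supported R R s) (h : ∀ a ∈ s, ∀ b, g a = Option.some b → b ∈ t) :
    filterMapDomain g v ∈ supported R R t := by
  intro b hb
  obtain ⟨a, ha, hab⟩ := exists_of_mem_support_filterMapDomain hb
  exact h a (hv ha) b hab

def diagonal (c : α → R) : (α →₀ R) →ₗ[R] α →₀ R :=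
  lsum R fun a => c a • lsingle a

theorem diagonal_single (c : α → R) (a : α) (r : R) :
    diagonal c (single a r) = c a • single a r := by
  simp [diagonal]

theorem diagonal_comm (c d : α → R) (v : α →₀ R) :
    diagonal c (diagonal d v) = diagonal d (diagonal c v) := by
  induction v using induction_linear with
  | zero => simp
  | add v w hv hw => simp only [map_add, hv, hw]
  | single a r => simp only [diagonal_single, map_smul, smul_smul, mul_comm]

theorem support_diagonal_subset (c : α → R) (v : α →₀ R) :
    (diagonal c v).support ⊆ v.support := by
  intro a ha
  rw [diagonal, lsum_apply] at ha
  obtain ⟨b, hb, hab⟩ := Finset.mem_biUnion.mp (support_sum ha)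
  simp only [LinearMap.smul_apply, lsingle_apply] at hab
  rwa [Finset.mem_singleton.mp (support_single_subset (support_smul hab))]

theorem diagonal_mem_supported (c : α → R) {s : Set α} {v : α →₀ R} (hv : v ∈ supported R R s) :
    diagonal c v ∈ supported R R s :=
  fun _ ha => hv (support_diagonal_subset c v ha)

theorem filterMapDomain_diagonal {g : α → Option β} {c : α → R} {d : β → R} (κ : R)
    (h : ∀ a b, g a = Option.some b → c a = κ * d b) (v : α →₀ R) :
    filterMapDomain g (diagonal c v) = κ • diagonal d (filterMapDomain g v) := by
  induction v using induction_linear with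
  | zero => simp
  | add v w hv hw => simp only [map_add, hv, hw, smul_add]
  | single a r =>
    rw [diagonal_single, map_smul, filterMapDomain_single]
    cases hg : g a with
    | none => simp
    | some b => simp only [Option.elim_some, diagonal_single, smul_smul, h a b hg]

end Finsupp

open Finsupp

def moveBead (i : ℤ) (b : Set ℤ) : Option (Set ℤ) :=
  if i ∈ b ∧ i + 1 ∉ b then some (b \ {i} ∪ {i + 1}) else none

/-- The simple root `α_j` as a weight: `simpleRoot j i = ⟨h_i, α_j⟩ = a_{ij}`. -/
def simpleRoot (j i : ℤ) : ℤ :=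
  if i = j then 2 else if i = j + 1 ∨ j = i + 1 then -1 else 0

/-- The weight `⟨h_i, wt v_b⟩` of the basis vector `v_b` of `V(Λ_k)`. -/
def setWeight (b : Set ℤ) (i : ℤ) : ℤ :=
  (if i ∈ b then 1 else 0) - (if i + 1 ∈ b then 1 else 0)

theorem moveBead_eq_some_iff {i : ℤ} {b b' : Set ℤ} :
    moveBead i b = some b' ↔ (i ∈ b ∧ i + 1 ∉ b) ∧ b \ {i} ∪ {i + 1} = b' := by
  unfold moveBead; split_ifs with h <;> simp [h]

theorem moveBead_eq_none_iff {i : ℤ} {b : Set ℤ} :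
    moveBead i b = none ↔ ¬(i ∈ b ∧ i + 1 ∉ b) := by
  unfold moveBead; split_ifs with h <;> simp [h]

theorem mem_of_moveBead_eq_some {i x : ℤ} {b b' : Set ℤ} (h : moveBead i b = some b') :
    x ∈ b' ↔ x ∈ b ∧ x ≠ i ∨ x = i + 1 := by
  obtain ⟨-, rfl⟩ := moveBead_eq_some_iff.mp h
  simp; tauto

theorem moveBead_bind_moveBead_self (i : ℤ) (b : Set ℤ) :
    (moveBead i b).bind (moveBead i) = none := by
  cases h : moveBead i b with
  | none => rfl
  | some b' => grind [moveBead_eq_none_iff, mem_of_moveBead_eq_some]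

theorem moveBead_bind_moveBead_bind_moveBead {i j : ℤ} (hij : i = j + 1 ∨ j = i + 1)
    (b : Set ℤ) : ((moveBead i b).bind (moveBead j)).bind (moveBead i) = none := by
  cases h : moveBead i b with
  | none => rfl
  | some b' =>
    cases h' : moveBead j b' with
    | none => simp [h']
    | some b'' => grind [moveBead_eq_none_iff, mem_of_moveBead_eq_some, moveBead_eq_some_iff]

theorem moveBead_bind_comm {i j : ℤ} (hij : i ≠ j) (h₁ : i ≠ j + 1) (h₂ : j ≠ i + 1)
    (b : Set ℤ) : (moveBead j b).bind (moveBead i) = (moveBead i b).bind (moveBead j) := by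
  cases hj : moveBead j b with
  | none =>
    cases hi : moveBead i b with
    | none => rfl
    | some b₂ => grind [moveBead_eq_none_iff, mem_of_moveBead_eq_some]
  | some b₁ =>
    cases hi : moveBead i b with
    | none => grind [moveBead_eq_none_iff, mem_of_moveBead_eq_some]
    | some b₂ =>
      rw [Option.bind_some, Option.bind_some, moveBead, moveBead,
        if_pos (by grind [moveBead_eq_some_iff, mem_of_moveBead_eq_some]),
        if_pos (by grind [moveBead_eq_some_iff, mem_of_moveBead_eq_some])]
      congr 1
      ext x
      simp only [Set.mem_union, Set.mem_sdiff, Set.mem_singleton_iff, mem_of_moveBead_eq_some hi,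
        mem_of_moveBead_eq_some hj]
      grind

theorem setWeight_of_moveBead_eq_some {i j : ℤ} {b b' : Set ℤ} (h : moveBead j b = some b') :
    setWeight b' i = setWeight b i - simpleRoot j i := by
  have := (moveBead_eq_some_iff.mp h).1
  unfold setWeight simpleRoot
  grind [mem_of_moveBead_eq_some]

theorem setWeight_eq_one_of_moveBead_eq_some {i : ℤ} {b b' : Set ℤ}
    (h : moveBead i b = some b') : setWeight b i = 1 := by
  have := (moveBead_eq_some_iff.mp h).1
  simp [setWeight, this]

theorem Kcoef_eq_zpow (i : ℤ) (b : Set ℤ) : Kcoef i b = RatFunc.X ^ setWeight b i := by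
  unfold Kcoef setWeight
  split_ifs <;> simp_all

abbrev FockSpace := (Set ℤ × Set ℤ) →₀ RatFunc ℚ

def Ftop (i : ℤ) : FockSpace →ₗ[RatFunc ℚ] FockSpace :=
  filterMapDomain fun p => (moveBead i p.1).map (·, p.2)

def Fbot (i : ℤ) : FockSpace →ₗ[RatFunc ℚ] FockSpace :=
  filterMapDomain fun p => (moveBead i p.2).map (p.1, ·)

def Kbot (i : ℤ) : FockSpace →ₗ[RatFunc ℚ] FockSpace :=
  diagonal fun p => Kcoef i p.2

theorem F2_apply (i : ℤ) (v : FockSpace) : F2 i v = Ftop i (Kbot i v) + Fbot i v := by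
  suffices F2 i = Ftop i ∘ₗ Kbot i + Fbot i from congr($this v)
  refine lhom_ext fun p c => ?_
  simp only [F2, Ftop, Fbot, Kbot, lsum_single, LinearMap.add_apply, LinearMap.comp_apply,
    diagonal_single, map_smul, filterMapDomain_single, moveBead]
  split_ifs <;> simp

theorem Ftop_Ftop (i j : ℤ) (v : FockSpace) : Ftop i (Ftop j v) =
    filterMapDomain (fun p => ((moveBead j p.1).bind (moveBead i)).map (·, p.2)) v := by
  rw [Ftop, Ftop, filterMapDomain_filterMapDomain]
  congr; funext p; cases moveBead j p.1 <;> rfl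

theorem Fbot_Fbot (i j : ℤ) (v : FockSpace) : Fbot i (Fbot j v) =
    filterMapDomain (fun p => ((moveBead j p.2).bind (moveBead i)).map (p.1, ·)) v := by
  rw [Fbot, Fbot, filterMapDomain_filterMapDomain]
  congr; funext p; cases moveBead j p.2 <;> rfl

theorem Ftop_Ftop_self (i : ℤ) (v : FockSpace) : Ftop i (Ftop i v) = 0 := by
  simp only [Ftop_Ftop, moveBead_bind_moveBead_self, Option.map_none, filterMapDomain_none]

theorem Fbot_Fbot_self (i : ℤ) (v : FockSpace) : Fbot i (Fbot i v) = 0 := by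
  simp only [Fbot_Fbot, moveBead_bind_moveBead_self, Option.map_none, filterMapDomain_none]

theorem Ftop_Ftop_Ftop {i j : ℤ} (hij : i = j + 1 ∨ j = i + 1) (v : FockSpace) :
    Ftop i (Ftop j (Ftop i v)) = 0 := by
  rw [Ftop_Ftop, Ftop, filterMapDomain_filterMapDomain]
  convert filterMapDomain_none v with p
  have h := moveBead_bind_moveBead_bind_moveBead hij p.1
  cases hp : moveBead i p.1 <;> simp_all

theorem Fbot_Fbot_Fbot {i j : ℤ} (hij : i = j + 1 ∨ j = i + 1) (v : FockSpace) :
    Fbot i (Fbot j (Fbot i v)) = 0 := by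
  rw [Fbot_Fbot, Fbot, filterMapDomain_filterMapDomain]
  convert filterMapDomain_none v with p
  have h := moveBead_bind_moveBead_bind_moveBead hij p.2
  cases hp : moveBead i p.2 <;> simp_all

theorem Ftop_comm {i j : ℤ} (hij : i ≠ j) (h₁ : i ≠ j + 1) (h₂ : j ≠ i + 1) (v : FockSpace) :
    Ftop i (Ftop j v) = Ftop j (Ftop i v) := by
  simp only [Ftop_Ftop, moveBead_bind_comm hij h₁ h₂]

theorem Fbot_comm {i j : ℤ} (hij : i ≠ j) (h₁ : i ≠ j + 1) (h₂ : j ≠ i + 1) (v : FockSpace) :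
    Fbot i (Fbot j v) = Fbot j (Fbot i v) := by
  simp only [Fbot_Fbot, moveBead_bind_comm hij h₁ h₂]

theorem Ftop_Fbot_comm (i j : ℤ) (v : FockSpace) : Ftop i (Fbot j v) = Fbot j (Ftop i v) := by
  rw [Ftop, Fbot, filterMapDomain_filterMapDomain, filterMapDomain_filterMapDomain]
  congr; funext ⟨b₁, b₂⟩
  cases h₁ : moveBead i b₁ <;> cases h₂ : moveBead j b₂ <;> simp [h₁, h₂]

theorem Ftop_Kbot_comm (i j : ℤ) (v : FockSpace) : Ftop i (Kbot j v) = Kbot j (Ftop i v) := by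
  rw [Ftop, Kbot, filterMapDomain_diagonal 1 _, one_smul]
  intro p p' hp
  obtain ⟨b, -, rfl⟩ := Option.map_eq_some_iff.mp hp
  rw [one_mul]

theorem Kbot_comm (i j : ℤ) (v : FockSpace) : Kbot i (Kbot j v) = Kbot j (Kbot i v) :=
  diagonal_comm _ _ v

theorem Fbot_Kbot (i j : ℤ) (v : FockSpace) :
    Fbot j (Kbot i v) = (RatFunc.X : RatFunc ℚ) ^ simpleRoot j i • Kbot i (Fbot j v) := by
  rw [Fbot, Kbot, filterMapDomain_diagonal]
  intro p p' hp
  obtain ⟨b, hb, rfl⟩ := Option.map_eq_some_iff.mp hp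
  have hX : (RatFunc.X : RatFunc ℚ) ≠ 0 := RatFunc.X_ne_zero
  rw [Kcoef_eq_zpow, Kcoef_eq_zpow, setWeight_of_moveBead_eq_some hb, ← zpow_add₀ hX]
  ring_nf

local notation "q" => (RatFunc.X : RatFunc ℚ)

theorem X_add_X_inv_ne_zero : q + q⁻¹ ≠ 0 := by
  have hX : q ≠ 0 := RatFunc.X_ne_zero
  have h := RatFunc.algebraMap_ne_zero (Polynomial.X_pow_add_C_ne_zero two_pos (1 : ℚ))
  rw [map_add, map_pow, RatFunc.algebraMap_X, RatFunc.algebraMap_C, map_one] at h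
  intro h0
  apply h
  calc q ^ 2 + 1 = q * (q + q⁻¹) := by field_simp
    _ = 0 := by rw [h0, mul_zero]

theorem simpleRoot_self (i : ℤ) : simpleRoot i i = 2 := if_pos rfl

theorem simpleRoot_of_adjacent {i j : ℤ} (hij : i = j + 1 ∨ j = i + 1) :
    simpleRoot j i = -1 := by
  rw [simpleRoot, if_neg (by omega), if_pos hij]

theorem simpleRoot_of_far {i j : ℤ} (hij : i ≠ j) (h₁ : i ≠ j + 1) (h₂ : j ≠ i + 1) :
    simpleRoot j i = 0 := by
  rw [simpleRoot, if_neg hij, if_neg (by omega)]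

theorem F2_F2 (i : ℤ) (v : FockSpace) :
    F2 i (F2 i v) = (1 + q ^ 2) • Ftop i (Kbot i (Fbot i v)) := by
  simp only [F2_apply, map_add, map_smul, ← Ftop_Fbot_comm, ← Ftop_Kbot_comm, Fbot_Kbot,
    Ftop_Ftop_self, Fbot_Fbot_self, simpleRoot_self, zpow_ofNat, add_zero, zero_add]
  rw [add_smul, one_smul, add_comm]

theorem F2d_two_apply (i : ℤ) (v : FockSpace) :
    F2d i 2 v = q • Ftop i (Kbot i (Fbot i v)) := by
  rw [F2d, if_pos rfl, LinearMap.smul_apply, LinearMap.comp_apply, F2_F2, smul_smul]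
  congr 1
  rw [inv_mul_eq_iff_eq_mul₀ X_add_X_inv_ne_zero]
  have hX : q ≠ 0 := RatFunc.X_ne_zero
  field_simp
  ring

theorem F2d_one (i : ℤ) : F2d i 1 = F2 i := if_neg (by decide)

theorem F2d_two_F2_self (i : ℤ) (v : FockSpace) : F2d i 2 (F2 i v) = 0 := by
  simp only [F2d_two_apply, F2_apply, map_add, map_smul, ← Ftop_Fbot_comm, ← Ftop_Kbot_comm,
    Fbot_Kbot, Ftop_Ftop_self, Fbot_Fbot_self, map_zero, add_zero, smul_zero]

theorem F2_comm {i j : ℤ} (hij : i ≠ j) (h₁ : i ≠ j + 1) (h₂ : j ≠ i + 1) (v : FockSpace) :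
    F2 i (F2 j v) = F2 j (F2 i v) := by
  simp only [F2_apply, map_add, ← Ftop_Fbot_comm, ← Ftop_Kbot_comm, Fbot_Kbot,
    Ftop_comm hij h₁ h₂, Fbot_comm hij h₁ h₂, Kbot_comm i j, simpleRoot_of_far hij h₁ h₂,
    simpleRoot_of_far hij.symm h₂ h₁, zpow_zero, one_smul]
  abel

theorem F2d_two_F2_comm {i j : ℤ} (hij : i ≠ j) (h₁ : i ≠ j + 1) (h₂ : j ≠ i + 1)
    (v : FockSpace) : F2d i 2 (F2 j v) = F2 j (F2d i 2 v) := by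
  simp only [F2d, if_pos, LinearMap.smul_apply, LinearMap.comp_apply, F2_comm hij h₁ h₂, map_smul]

theorem F2d_two_add_F2_F2d_two {i j : ℤ} (hij : i = j + 1 ∨ j = i + 1) (v : FockSpace) :
    F2d i 2 (F2 j v) + F2 j (F2d i 2 v) = F2 i (F2 j (F2 i v)) := by
  simp only [F2d_two_apply, F2_apply, map_add, map_smul, ← Ftop_Fbot_comm, ← Ftop_Kbot_comm,
    Fbot_Kbot, Ftop_Ftop_self, Fbot_Fbot_self, Ftop_Ftop_Ftop hij, Fbot_Fbot_Fbot hij,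
    simpleRoot_self, simpleRoot_of_adjacent hij, simpleRoot_of_adjacent hij.symm, zpow_ofNat,
    zpow_neg_one, map_zero, add_zero, zero_add, smul_zero, Kbot_comm j i, smul_add, smul_smul]
  have hX : q ≠ 0 := RatFunc.X_ne_zero
  rw [mul_inv_cancel₀ hX, one_smul, one_smul, show q ^ 2 * q⁻¹ = q by field_simp,
    show q⁻¹ * q ^ 2 = q by field_simp]
  abel

def pairWeight (p : Set ℤ × Set ℤ) : ℤ → ℤ := setWeight p.1 + setWeight p.2

def weightSpace (μ : ℤ → ℤ) : Submodule (RatFunc ℚ) FockSpace :=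
  supported (RatFunc ℚ) (RatFunc ℚ) {p | pairWeight p = μ}

theorem Ftop_mem_weightSpace {μ : ℤ → ℤ} {v : FockSpace} (hv : v ∈ weightSpace μ) (j : ℤ) :
    Ftop j v ∈ weightSpace (μ - simpleRoot j) := by
  refine filterMapDomain_mem_supported hv fun p (hp : pairWeight p = μ) p' hp' => ?_
  obtain ⟨b, hb, rfl⟩ := Option.map_eq_some_iff.mp hp'
  show pairWeight _ = _
  funext i
  simp only [← hp, pairWeight, Pi.add_apply, Pi.sub_apply, setWeight_of_moveBead_eq_some hb]
  ring

theorem Fbot_mem_weightSpace {μ : ℤ → ℤ} {v : FockSpace} (hv : v ∈ weightSpace μ) (j : ℤ) :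
    Fbot j v ∈ weightSpace (μ - simpleRoot j) := by
  refine filterMapDomain_mem_supported hv fun p (hp : pairWeight p = μ) p' hp' => ?_
  obtain ⟨b, hb, rfl⟩ := Option.map_eq_some_iff.mp hp'
  show pairWeight _ = _
  funext i
  simp only [← hp, pairWeight, Pi.add_apply, Pi.sub_apply, setWeight_of_moveBead_eq_some hb]
  ring

theorem F2_mem_weightSpace {μ : ℤ → ℤ} {v : FockSpace} (hv : v ∈ weightSpace μ) (j : ℤ) :
    F2 j v ∈ weightSpace (μ - simpleRoot j) := by
  rw [F2_apply]
  exact add_mem (Ftop_mem_weightSpace (diagonal_mem_supported _ hv) j) (Fbot_mem_weightSpace hv j)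

theorem Ftop_Kbot_Fbot_eq_zero {μ : ℤ → ℤ} {v : FockSpace} (hv : v ∈ weightSpace μ) {i : ℤ}
    (hi : μ i ≠ 2) : Ftop i (Kbot i (Fbot i v)) = 0 := by
  by_contra h
  obtain ⟨p, hp⟩ := Finsupp.support_nonempty_iff.mpr h
  obtain ⟨p₁, hp₁, h₁⟩ := exists_of_mem_support_filterMapDomain hp
  obtain ⟨p₀, hp₀, h₀⟩ := exists_of_mem_support_filterMapDomain (support_diagonal_subset _ _ hp₁)
  obtain ⟨b₁, hb₁, -⟩ := Option.map_eq_some_iff.mp h₁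
  obtain ⟨b₂, hb₂, rfl⟩ := Option.map_eq_some_iff.mp h₀
  apply hi
  rw [← hv hp₀, pairWeight, Pi.add_apply, setWeight_eq_one_of_moveBead_eq_some hb₁,
    setWeight_eq_one_of_moveBead_eq_some hb₂]
  rfl

theorem F2d_two_eq_zero {μ : ℤ → ℤ} {v : FockSpace} (hv : v ∈ weightSpace μ) {i : ℤ}
    (hi : μ i ≠ 2) : F2d i 2 v = 0 := by
  rw [F2d_two_apply, Ftop_Kbot_Fbot_eq_zero hv hi, smul_zero]

def applyF (J : List ℤ) (v : FockSpace) : FockSpace :=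
  applyW (J.map fun j => (j, 1)) v

theorem applyW_append_singleton (L : List (ℤ × ℕ)) (p : ℤ × ℕ) (v : FockSpace) :
    applyW (L ++ [p]) v = F2d p.1 p.2 (applyW L v) := by
  simp [applyW, List.foldl_append]

theorem applyF_append_singleton (J : List ℤ) (j : ℤ) (v : FockSpace) :
    applyF (J ++ [j]) v = F2 j (applyF J v) := by
  rw [applyF, List.map_append, List.map_singleton, applyW_append_singleton, F2d_one, applyF]

theorem exists_applyF_mem_weightSpace {μ : ℤ → ℤ} {v : FockSpace} (hv : v ∈ weightSpace μ)
    (J : List ℤ) : ∃ ν, applyF J v ∈ weightSpace ν := by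
  induction J using List.reverseRecOn with
  | nil => exact ⟨μ, hv⟩
  | append_singleton J j ih =>
    obtain ⟨ν, hν⟩ := ih
    exact ⟨ν - simpleRoot j, applyF_append_singleton J j v ▸ F2_mem_weightSpace hν j⟩

theorem exists_applyF_eq_F2d_two {μ : ℤ → ℤ} {v : FockSpace} (hv : v ∈ weightSpace μ)
    (hμ : ∀ i, μ i ≠ 2) (i : ℤ) (J : List ℤ) (h : F2d i 2 (applyF J v) ≠ 0) :
    ∃ J' : List ℤ, J'.length = J.length + 2 ∧ applyF J' v = F2d i 2 (applyF J v) := by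
  induction J using List.reverseRecOn with
  | nil => exact absurd (F2d_two_eq_zero hv (hμ i)) h
  | append_singleton J j ih =>
    rw [applyF_append_singleton] at h ⊢
    obtain ⟨ν, hν⟩ := exists_applyF_mem_weightSpace hv J
    by_cases hij : i = j
    · exact absurd (hij ▸ F2d_two_F2_self i _) h
    by_cases hadj : i = j + 1 ∨ j = i + 1
    · have hνi : ν i ≠ 2 := by
        intro hνi
        refine h (F2d_two_eq_zero (F2_mem_weightSpace hν j) ?_)
        simp [simpleRoot_of_adjacent hadj, hνi]
      have hserre := F2d_two_add_F2_F2d_two hadj (applyF J v)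
      rw [F2d_two_eq_zero hν hνi, map_zero, add_zero] at hserre
      refine ⟨J ++ [i, j, i], by simp, ?_⟩
      rw [hserre, show J ++ [i, j, i] = J ++ [i] ++ [j] ++ [i] by simp, applyF_append_singleton,
        applyF_append_singleton, applyF_append_singleton]
    · push Not at hadj
      rw [F2d_two_F2_comm hij hadj.1 hadj.2] at h ⊢
      obtain ⟨J', hJ', hJ'v⟩ := ih fun h0 => h (by rw [h0, map_zero])
      exact ⟨J' ++ [j], by simp [hJ'], by rw [applyF_append_singleton, hJ'v]⟩

theorem exists_applyF_eq_applyW {μ : ℤ → ℤ} {v : FockSpace} (hv : v ∈ weightSpace μ)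
    (hμ : ∀ i, μ i ≠ 2) (L : List (ℤ × ℕ)) (hr : ∀ p ∈ L, p.2 = 1 ∨ p.2 = 2)
    (h : applyW L v ≠ 0) :
    ∃ J : List ℤ, J.length = (L.map Prod.snd).sum ∧ applyF J v = applyW L v := by
  induction L using List.reverseRecOn with
  | nil => exact ⟨[], rfl, rfl⟩
  | append_singleton L p ih =>
    rw [applyW_append_singleton] at h ⊢
    obtain ⟨J, hJ, hJv⟩ :=
      ih (fun p hp => hr p (by simp [hp])) fun h0 => h (by rw [h0, map_zero])
    obtain ⟨i, r⟩ := p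
    rcases hr (i, r) (by simp) with rfl | rfl
    · exact ⟨J ++ [i], by simp [hJ], by rw [applyF_append_singleton, hJv, F2d_one]⟩
    · rw [← hJv] at h ⊢
      obtain ⟨J', hJ', hJ'v⟩ := exists_applyF_eq_F2d_two hv hμ i J h
      exact ⟨J', by simp [hJ', hJ], hJ'v⟩

theorem setWeight_setOf_le (s i : ℤ) : setWeight {j | j ≤ s} i = if i = s then 1 else 0 := by
  simp only [setWeight, Set.mem_ofPred_eq]
  split_ifs <;> omega

theorem v0_mem_weightSpace (s1 s2 : ℤ) :
    v0 s1 s2 ∈ weightSpace (pairWeight ({j | j ≤ s1}, {j | j ≤ s2})) :=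
  single_mem_supported _ _ rfl

theorem pairWeight_setOf_le_ne_two {s1 s2 : ℤ} (h : s1 ≠ s2) (i : ℤ) :
    pairWeight ({j | j ≤ s1}, {j | j ≤ s2}) i ≠ 2 := by
  simp only [pairWeight, Pi.add_apply, setWeight_setOf_le]
  split_ifs <;> omega

end

/-- for `s_1 > s_2`, any nonzero vector
`F_{i_k}^{(r_k)} ⋯ F_{i_1}^{(r_1)} · v_{S⁰}` with all `r_j ∈ {1, 2}` and `Σ r_j = n`
can be written as `F_{j_n} ⋯ F_{j_1} · v_{S⁰}`. -/
theorem stmt13 (s1 s2 : ℤ) (h : s2 < s1) (n : ℕ) (L : List (ℤ × ℕ))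
    (hr : ∀ p ∈ L, p.2 = 1 ∨ p.2 = 2)
    (hsum : (L.map Prod.snd).sum = n)
    (hnz : applyW L (v0 s1 s2) ≠ 0) :
    ∃ J : List ℤ, J.length = n ∧
      applyW (J.map fun j => (j, 1)) (v0 s1 s2) = applyW L (v0 s1 s2) := by
  obtain ⟨J, hJ, hJv⟩ :=
    exists_applyF_eq_applyW (v0_mem_weightSpace s1 s2) (pairWeight_setOf_le_ne_two h.ne') L hr hnz
  exact ⟨J, hsum ▸ hJ, hJv⟩
end

section
/- Let s = (s, s) ∈ Z^2. For any i_1,...,i_k ∈ Z, the vector F_{i_k}^{(2)} ··· F_{i_1}^{(2)} · v_{S^0} in F'_s = V(Λ_s) ⊗ V(Λ_s) is either zero or equal to v_S for a symbol S of the form (β, β) (both rows equal), i.e., a single standard basis vector with coefficient 1. -/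
open Classical

lemma F2_single (i : ℤ) (β γ : Set ℤ) (c : RatFunc ℚ) :
    F2 i (Finsupp.single (β, γ) c) =
      (if i ∈ β ∧ (i+1) ∉ β then Kcoef i γ • Finsupp.single ((β \ {i}) ∪ {i+1}, γ) c else 0)
      + (if i ∈ γ ∧ (i+1) ∉ γ then Finsupp.single (β, (γ \ {i}) ∪ {i+1}) c else 0) := by
  rw [F2, Finsupp.lsum_single]
  by_cases h1 : i ∈ β ∧ (i+1) ∉ β <;> by_cases h2 : i ∈ γ ∧ (i+1) ∉ γ <;>
    simp [h1, h2, Finsupp.lsingle_apply]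

lemma two_q_ne_zero : (RatFunc.X + RatFunc.X⁻¹ : RatFunc ℚ) ≠ 0 := by
  intro h
  have hX : (RatFunc.X : RatFunc ℚ) ≠ 0 := RatFunc.X_ne_zero
  have h2 : (RatFunc.X * RatFunc.X + 1 : RatFunc ℚ) = 0 := by
    have := congrArg (· * RatFunc.X) h
    field_simp at this
    linear_combination this
  have h3 : (Polynomial.X * Polynomial.X + 1 : Polynomial ℚ) = 0 := by
    apply RatFunc.algebraMap_injective ℚ
    rw [map_add, map_mul, map_one, map_zero, RatFunc.algebraMap_X]
    exact h2
  have := congrArg (Polynomial.eval 0) h3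
  simp at this

lemma key (i : ℤ) (β : Set ℤ) :
    F2d i 2 (Finsupp.single (β, β) (1 : RatFunc ℚ)) = 0 ∨
    ∃ β' : Set ℤ, F2d i 2 (Finsupp.single (β, β) (1 : RatFunc ℚ))
      = Finsupp.single (β', β') (1 : RatFunc ℚ) := by
  rw [F2d, if_pos rfl]
  simp only [LinearMap.smul_apply, LinearMap.comp_apply]
  by_cases h : i ∈ β ∧ (i+1) ∉ β
  · right
    set β' : Set ℤ := (β \ {i}) ∪ {i+1} with hβ'
    have hi : i ∉ β' := by
      intro hm
      rcases hm with h1 | h1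
      · exact h1.2 rfl
      · simp only [Set.mem_singleton_iff] at h1; omega
    have hi1 : (i+1) ∈ β' := Or.inr rfl
    refine ⟨β', ?_⟩
    have hK : Kcoef i β = RatFunc.X := by rw [Kcoef, if_pos h]
    have hK' : Kcoef i β' = RatFunc.X⁻¹ := by
      rw [Kcoef, if_neg (fun hc => hi hc.1), if_pos ⟨hi, hi1⟩]
    have e1 : F2 i (Finsupp.single (β, β) (1 : RatFunc ℚ))
        = (RatFunc.X : RatFunc ℚ) • Finsupp.single (β', β) (1 : RatFunc ℚ) + Finsupp.single (β, β') (1 : RatFunc ℚ) := by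
      rw [F2_single, if_pos h, if_pos h, hK]
    have e2 : F2 i (Finsupp.single (β', β) (1 : RatFunc ℚ))
        = Finsupp.single (β', β') (1 : RatFunc ℚ) := by
      rw [F2_single, if_neg (fun hc => hi hc.1), if_pos h, zero_add]
    have e3 : F2 i (Finsupp.single (β, β') (1 : RatFunc ℚ))
        = (RatFunc.X⁻¹ : RatFunc ℚ) • Finsupp.single (β', β') (1 : RatFunc ℚ) := by
      rw [F2_single, if_pos h, hK', if_neg (fun hc => hi hc.1), add_zero]
    rw [e1, map_add, map_smul, e2, e3, ← add_smul, smul_smul,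
      inv_mul_cancel₀ two_q_ne_zero, one_smul]
  · left
    rw [F2_single, if_neg h, if_neg h, add_zero, map_zero, smul_zero]

lemma step (i : ℤ) (v : (Set ℤ × Set ℤ) →₀ RatFunc ℚ)
    (hv : v = 0 ∨ ∃ β : Set ℤ, v = Finsupp.single (β, β) (1 : RatFunc ℚ)) :
    F2d i 2 v = 0 ∨ ∃ β : Set ℤ, F2d i 2 v = Finsupp.single (β, β) (1 : RatFunc ℚ) := by
  rcases hv with rfl | ⟨β, rfl⟩
  · left; exact map_zero _
  · exact key i β


/-- for the multicharge `(s, s)`, any vector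
`F_{i_k}^{(2)} ⋯ F_{i_1}^{(2)} · v_{S⁰}` is either zero or a single standard basis
vector `v_S` (with coefficient `1`) for a symbol `S = (β, β)` with both rows equal. -/
theorem stmt15 (s : ℤ) (L : List ℤ) :
    applyW (L.map fun i => (i, 2)) (v0 s s) = 0 ∨
      ∃ β : Set ℤ, applyW (L.map fun i => (i, 2)) (v0 s s) =
        Finsupp.single (β, β) (1 : RatFunc ℚ) := by
  suffices H : ∀ (v : (Set ℤ × Set ℤ) →₀ RatFunc ℚ),
      (v = 0 ∨ ∃ β : Set ℤ, v = Finsupp.single (β, β) (1 : RatFunc ℚ)) →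
      (applyW (L.map fun i => (i, 2)) v = 0 ∨
        ∃ β : Set ℤ, applyW (L.map fun i => (i, 2)) v =
          Finsupp.single (β, β) (1 : RatFunc ℚ)) by
    exact H _ (Or.inr ⟨_, rfl⟩)
  induction L with
  | nil => intro v hv; exact hv
  | cons i L ih =>
    intro v hv
    exact ih _ (step i v hv)
end

section
/- Let λ be a partition (equivalently a 1-partition) and consider the bipartition (λ, λ) of 2|λ| with the multicharge (s, s). Then the 2-symbol of (λ, λ) has both rows equal, and it is the unique 2-symbol of charge (s,s) with its underlying multiset of entries. Consequently, χ_{(λ,λ)} is alone in its Calogero–Moser family (families being determined by the multiset of symbol entries). -/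
open scoped BigOperators

/-- A partition: a weakly decreasing sequence of non-negative integers, eventually zero.
`part i` is the `(i+1)`-st part. -/
structure PartitionSeq where
  part : ℕ → ℕ
  antitone : ∀ i j : ℕ, i ≤ j → part j ≤ part i
  eventually_zero : ∃ N : ℕ, ∀ i : ℕ, N ≤ i → part i = 0

/-- The Young diagram of an `l`-partition: boxes `(a, b, c)` with `a, b ≥ 1` and
`b ≤ λ^{(c)}_a`. -/
def YDiag {l : ℕ} (lam : Fin l → PartitionSeq) : Set (ℕ × ℕ × Fin l) :=
  {x | 1 ≤ x.1 ∧ 1 ≤ x.2.1 ∧ x.2.1 ≤ (lam x.2.2).part (x.1 - 1)}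

/-- A box `γ` of `[λ]` is removable if `[λ] \ {γ}` is again the Young diagram of an
`l`-partition. -/
def Removable {l : ℕ} (lam : Fin l → PartitionSeq) (γ : ℕ × ℕ × Fin l) : Prop :=
  γ ∈ YDiag lam ∧ ∃ mu : Fin l → PartitionSeq, YDiag mu = YDiag lam \ {γ}

/-- A box `γ ∉ [λ]` is addable if `[λ] ∪ {γ}` is again the Young diagram of an
`l`-partition. -/
def Addable {l : ℕ} (lam : Fin l → PartitionSeq) (γ : ℕ × ℕ × Fin l) : Prop :=
  γ ∉ YDiag lam ∧ ∃ mu : Fin l → PartitionSeq, YDiag mu = insert γ (YDiag lam)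

/-- The charged content `b - a + s_c` of a box `(a, b, c)` relative to the charge `s`. -/
def content {l : ℕ} (s : Fin l → ℤ) (γ : ℕ × ℕ × Fin l) : ℤ :=
  (γ.2.1 : ℤ) - (γ.1 : ℤ) + s γ.2.2
/-- An `l`-symbol of charge `s`: an `l`-tuple of strictly increasing integer sequences
`β_k = (β_{k,j})_{j ≤ s_k}` with `β_{k,j} = j` for `j ≪ 0`. -/
structure LSymbol (l : ℕ) (s : Fin l → ℤ) where
  β : (k : Fin l) → {j : ℤ // j ≤ s k} → ℤ
  strict : ∀ k : Fin l, StrictMono (β k)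
  lower : ∀ k : Fin l, ∃ N : ℤ, ∀ j : {j : ℤ // j ≤ s k}, j.val ≤ N → β k j = j.val

/-!
The two rows of the symbol of `(λ, λ)` coincide, so every integer occurs in its multiset of
entries with multiplicity `0` or `2`. A row of any other symbol contains an entry at most once,
so multiplicity `2` forces an entry into both rows and multiplicity `0` into neither: each row
of a symbol in the same family has the same set of entries as the corresponding row of `(λ, λ)`.
A row is a strictly increasing map out of `{j ≤ s}`, whose order is well-founded from above,
and such maps are determined by their ranges.
-/

theorem StrictMono.range_inj_of_wellFoundedGT {β γ : Type*} [LinearOrder β] [Preorder γ]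
    [WellFoundedGT β] {f g : β → γ} (hf : StrictMono f) (hg : StrictMono g) :
    Set.range f = Set.range g ↔ f = g := by
  refine ⟨fun h => ?_, fun h => h ▸ rfl⟩
  have hdual : OrderDual.toDual ∘ f = OrderDual.toDual ∘ g :=
    (hf.dual_right.range_inj hg.dual_right).1 (by rw [Set.range_comp, Set.range_comp, h])
  exact funext fun b => congrFun hdual b

instance Int.wellFoundedGT_subtype_le (s : ℤ) : WellFoundedGT {j : ℤ // j ≤ s} :=
  StrictAnti.wellFoundedGT (f := fun j : {j : ℤ // j ≤ s} => (s - j).toNat) fun a b hab => by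
    show (s - b).toNat < (s - a).toNat
    have := b.2; have : (a : ℤ) < b := hab
    omega

theorem Int.funext_le_of_sub_natCast {α : Type*} {s : ℤ} {f g : {j : ℤ // j ≤ s} → α}
    (h : ∀ i : ℕ,
      f ⟨s - i, sub_le_self s i.cast_nonneg⟩ = g ⟨s - i, sub_le_self s i.cast_nonneg⟩) :
    f = g := by
  funext ⟨j, hj⟩
  obtain ⟨i, rfl⟩ : ∃ i : ℕ, j = s - i := ⟨(s - j).toNat, by omega⟩
  exact h i

theorem LSymbol.ext {l : ℕ} {s : Fin l → ℤ} {S T : LSymbol l s} (h : S.β = T.β) :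
    S = T := by
  cases S; cases T; cases h; rfl

theorem LSymbol.eq_of_range_β_eq {l : ℕ} {s : Fin l → ℤ} {S T : LSymbol l s}
    (h : ∀ k, Set.range (S.β k) = Set.range (T.β k)) : S = T :=
  LSymbol.ext <| funext fun k =>
    ((S.strict k).range_inj_of_wellFoundedGT (T.strict k)).1 (h k)

theorem iff_and_iff_of_ite_add_ite_eq_ite_add_self {P Q R : Prop}
    [Decidable P] [Decidable Q] [Decidable R]
    (h : ((if P then 1 else 0) + (if Q then 1 else 0) : ℕ) =
      (if R then 1 else 0) + (if R then 1 else 0)) :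
    (P ↔ R) ∧ (Q ↔ R) := by
  by_cases P <;> by_cases Q <;> by_cases R <;> simp_all

open Classical in
/-- the 2-symbol of a bipartition `(λ, λ)` with multicharge `(s, s)` has
both rows equal, and any 2-symbol of charge `(s, s)` with the same underlying multiset
of entries (entry multiplicities computed row by row) equals it. Hence `χ_{(λ,λ)}` is
alone in its Calogero–Moser family. -/
theorem stmt16 (s : ℤ) (lam : PartitionSeq) (S : LSymbol 2 (fun _ => s))
    (hrel : ∀ (k : Fin 2) (i : ℕ),
      S.β k ⟨s - (i : ℤ), by omega⟩ = (lam.part i : ℤ) + s - (i : ℤ)) :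
    S.β 0 = S.β 1 ∧
      ∀ T : LSymbol 2 (fun _ => s),
        (∀ x : ℤ,
          ((if ∃ j, T.β 0 j = x then 1 else 0) + (if ∃ j, T.β 1 j = x then 1 else 0) : ℕ) =
            (if ∃ j, S.β 0 j = x then 1 else 0) + (if ∃ j, S.β 1 j = x then 1 else 0)) →
        T = S := by
  have hrows : S.β 0 = S.β 1 := Int.funext_le_of_sub_natCast fun i => by rw [hrel 0 i, hrel 1 i]
  refine ⟨hrows, fun T hT => ?_⟩
  have hrange : ∀ x, (x ∈ Set.range (T.β 0) ↔ x ∈ Set.range (S.β 0)) ∧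
      (x ∈ Set.range (T.β 1) ↔ x ∈ Set.range (S.β 0)) := fun x => by
    have h := hT x
    rw [← hrows] at h
    exact iff_and_iff_of_ite_add_ite_eq_ite_add_self h
  refine LSymbol.eq_of_range_β_eq fun k => Set.ext fun x => ?_
  fin_cases k
  · exact (hrange x).1
  · exact hrows ▸ (hrange x).2
end
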